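/- arXiv:2301.00317 — 4 statements merged into one kernel-verified Lean document; each statement's English description precedes it below -/
import Mathlib

section
/- Let D_{1,n,s} (n, s ≥ 1) be the tree obtained from a path on n vertices by attaching one leaf at one end and s leaves at the other end. For k ∈ {2,3}, TS_k(D_{1,n,s}) contains a cycle C_4 if n ≥ 2k − 1, and otherwise TS_k(D_{1,n,s}) is acyclic. -/
open SimpleGraph

/-- `I` is a size-`k` independent set of `G`: a vertex of the token sliding graph. -/
def TSVert {W : Type*} (G : SimpleGraph W) (k : ℕ) (I : Finset W) : Prop :=
  I.card = k ∧ ∀ u ∈ I, ∀ v ∈ I, ¬ G.Adj u v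

/-- The token sliding graph `TS_k(G)`: vertices are size-`k` independent sets of `G`,
two sets adjacent iff they differ by sliding one token along an edge of `G`. -/
def TS {W : Type*} (G : SimpleGraph W) (k : ℕ) :
    SimpleGraph {I : Finset W // TSVert G k I} :=
  SimpleGraph.fromRel fun I J =>
    ∃ u v, ((I : Finset W) : Set W) \ ((J : Finset W) : Set W) = {u} ∧
      ((J : Finset W) : Set W) \ ((I : Finset W) : Set W) = {v} ∧ G.Adj u v

/-- `2K₂`: two disjoint edges, `0-1` and `2-3`. -/
def twoK2 : SimpleGraph (Fin 4) :=
  SimpleGraph.fromRel fun a b => (a = 0 ∧ b = 1) ∨ (a = 2 ∧ b = 3)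

/-- Disjoint union of two simple graphs. -/
def disjUnion' {α β : Type*} (G : SimpleGraph α) (H : SimpleGraph β) :
    SimpleGraph (α ⊕ β) :=
  SimpleGraph.fromRel fun a b =>
    (∃ x y, a = Sum.inl x ∧ b = Sum.inl y ∧ G.Adj x y) ∨
    (∃ x y, a = Sum.inr x ∧ b = Sum.inr y ∧ H.Adj x y)

/-- `nK₁`: `n` isolated vertices. -/
def nK1 (n : ℕ) : SimpleGraph (Fin n) := ⊥

/-- `D r n s`: the tree obtained from the path on `n` vertices by appending `r` leaves
at one endpoint and `s` leaves at the other endpoint. -/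
def D (r n s : ℕ) : SimpleGraph (Fin r ⊕ Fin n ⊕ Fin s) :=
  SimpleGraph.fromRel fun a b =>
    (∃ i j : Fin n, a = Sum.inr (Sum.inl i) ∧ b = Sum.inr (Sum.inl j) ∧ (j : ℕ) = (i : ℕ) + 1) ∨
    (∃ (u : Fin r) (i : Fin n), a = Sum.inl u ∧ b = Sum.inr (Sum.inl i) ∧ (i : ℕ) = 0) ∨
    (∃ (v : Fin s) (i : Fin n), a = Sum.inr (Sum.inr v) ∧ b = Sum.inr (Sum.inl i) ∧ (i : ℕ) = n - 1)

/-- The star `K_{1,s}`: center `0` with `s` leaves. -/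
def star' (s : ℕ) : SimpleGraph (Fin (s + 1)) :=
  SimpleGraph.fromRel fun a _ => a = 0

/-- `G` contains a cycle of length `n`. -/
def HasCycleLen {α : Type*} (G : SimpleGraph α) (n : ℕ) : Prop :=
  ∃ (v : α) (w : G.Walk v v), w.IsCycle ∧ w.length = n

/-- `G` contains a cycle. -/
def HasCycle {α : Type*} (G : SimpleGraph α) : Prop :=
  ∃ (v : α) (w : G.Walk v v), w.IsCycle

/-!
Put the vertices of `D r n s` at positions `0, …, n + 1`: the `r` leaves at `0`, the path vertex
`p_i` at `i + 1` and the `s` leaves at `n + 1`. Two vertices are adjacent iff their positions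
are consecutive, so independence and sliding become statements about positions.

If `n ≥ 2k - 1`, park `k - 2` tokens at positions `3, 5, …, 2k - 3`; the two remaining tokens
slide independently along the edge at position `0–1` and along an edge at `n–(n+1)`, and the
four resulting configurations form a `C₄`.

If `n < 2k - 1` and `k ≤ 3`, give each configuration the total `height` of its tokens. Adjacent
configurations have different heights, and there is too little room for two different
height-decreasing slides from one independent `k`-set. So every configuration has at most one
lower neighbour, which rules out cycles: the highest vertex of a cycle would have two.
-/

theorem SimpleGraph.isAcyclic_of_lower_neighbor_unique {V α : Type*} [LinearOrder α]
    {G : SimpleGraph V} (μ : V → α) (hne : ∀ ⦃u v⦄, G.Adj u v → μ u ≠ μ v)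
    (hunique : ∀ ⦃u v w⦄, G.Adj u v → G.Adj u w → μ v < μ u → μ w < μ u → v = w) :
    G.IsAcyclic := by
  classical
  intro v c hc
  obtain ⟨u, hu, hmax⟩ := c.support.toFinset.exists_max_image μ ⟨v, by simp⟩
  rw [List.mem_toFinset] at hu
  set c' := c.rotate _ hu
  have hc' : c'.IsCycle := Walk.IsCycle.rotate hu hc
  have lower : ∀ x, G.Adj u x → x ∈ c'.support → μ x < μ u := fun x hx hmem =>
    (hmax x (List.mem_toFinset.2 ((c.mem_support_rotate_iff _ hu).1 hmem))).lt_of_ne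
      (hne hx).symm
  have hsnd := c'.adj_snd hc'.not_nil
  have hpen := (c'.adj_penultimate hc'.not_nil).symm
  exact hc'.snd_ne_penultimate <| hunique hsnd hpen
    (lower _ hsnd (c'.getVert_mem_support _)) (lower _ hpen (c'.getVert_mem_support _))

theorem SimpleGraph.hasCycleLen_four_of_adj {V : Type*} {G : SimpleGraph V} {a b c d : V}
    (hab : G.Adj a b) (hbc : G.Adj b c) (hcd : G.Adj c d) (hda : G.Adj d a)
    (hac : a ≠ c) (hbd : b ≠ d) : HasCycleLen G 4 := by
  refine ⟨a, .cons hab (.cons hbc (.cons hcd (.cons hda .nil))), ?_, rfl⟩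
  have := hab.ne; have := hbc.ne; have := hcd.ne; have := hda.ne
  refine ⟨⟨?_, by simp⟩, ?_⟩
  · simp only [Walk.isTrail_def, Walk.edges_cons, Walk.edges_nil, List.nodup_cons,
      List.mem_cons, List.not_mem_nil, or_false, List.nodup_nil, and_true, Sym2.eq,
      Sym2.rel_iff', Prod.mk.injEq, Prod.swap_prod_mk, not_or]
    tauto
  · simp only [Walk.support_cons, Walk.support_nil, List.tail_cons, List.nodup_cons,
      List.mem_cons, List.not_mem_nil, or_false, List.nodup_nil, and_true]
    tauto

section Finset

variable {W : Type*} [DecidableEq W]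

theorem Finset.eq_insert_erase_of_coe_sdiff {A B : Finset W} {u v : W}
    (hA : (↑A \ ↑B : Set W) = {u}) (hB : (↑B \ ↑A : Set W) = {v}) :
    u ∈ A ∧ v ∉ A ∧ B = insert v (A.erase u) := by
  simp only [Set.ext_iff, Set.mem_sdiff, Finset.mem_coe, Set.mem_singleton_iff] at hA hB
  refine ⟨((hA u).2 rfl).1, ((hB v).2 rfl).2, Finset.ext fun x => ?_⟩
  grind

theorem Finset.coe_insert_sdiff_coe_insert {T : Finset W} {a b : W} (hab : a ≠ b)
    (ha : a ∉ T) : (↑(insert a T) \ ↑(insert b T) : Set W) = {a} := by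
  ext x
  simp only [Set.mem_sdiff, Finset.coe_insert, Set.mem_insert_iff, Finset.mem_coe,
    Set.mem_singleton_iff]
  grind

theorem Finset.sum_insert_erase_add {M : Type*} [AddCommMonoid M] (w : W → M) {I : Finset W}
    {u v : W} (hu : u ∈ I) (hv : v ∉ I) :
    ∑ x ∈ insert v (I.erase u), w x + w u = ∑ x ∈ I, w x + w v := by
  rw [Finset.sum_insert (fun h => hv (Finset.mem_of_mem_erase h)), add_assoc,
    Finset.sum_erase_add _ _ hu, add_comm]

end Finset

def IsSlide {W : Type*} (G : SimpleGraph W) (I : Finset W) (u v : W) : Prop :=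
  G.Adj u v ∧ u ∈ I ∧ v ∉ I ∧ ∀ x ∈ I, x ≠ u → ¬ G.Adj x v

namespace TS

variable {W : Type*} [DecidableEq W] {G : SimpleGraph W} {k : ℕ}

theorem exists_isSlide_of_adj {I J : {I : Finset W // TSVert G k I}} (h : (TS G k).Adj I J) :
    ∃ u v, IsSlide G I.1 u v ∧ J.1 = insert v (I.1.erase u) := by
  obtain ⟨u, v, hadj, hu, hv, hJ⟩ : ∃ u v, G.Adj u v ∧ u ∈ I.1 ∧ v ∉ I.1 ∧
      J.1 = insert v (I.1.erase u) := by
    rw [TS, fromRel_adj] at h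
    obtain ⟨-, ⟨u, v, hIJ, hJI, hadj⟩ | ⟨v, u, hJI, hIJ, hadj⟩⟩ := h
    · exact ⟨u, v, hadj, Finset.eq_insert_erase_of_coe_sdiff hIJ hJI⟩
    · exact ⟨u, v, hadj.symm, Finset.eq_insert_erase_of_coe_sdiff hIJ hJI⟩
  refine ⟨u, v, ⟨hadj, hu, hv, fun x hx hxu => J.2.2 x ?_ v ?_⟩, hJ⟩ <;> simp [hJ, hx, hxu]

theorem adj_of_eq_insert {I J : {I : Finset W // TSVert G k I}} {T : Finset W} {u v : W}
    (hadj : G.Adj u v) (hu : u ∉ T) (hv : v ∉ T) (hI : I.1 = insert u T)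
    (hJ : J.1 = insert v T) : (TS G k).Adj I J := by
  rw [TS, fromRel_adj, hI, hJ]
  refine ⟨fun h => ?_, .inl ⟨u, v, ?_, ?_, hadj⟩⟩
  · have : u ∈ J.1 := by rw [← h, hI]; exact Finset.mem_insert_self u T
    rw [hJ, Finset.mem_insert] at this
    exact this.elim hadj.ne hu
  · exact Finset.coe_insert_sdiff_coe_insert hadj.ne hu
  · exact Finset.coe_insert_sdiff_coe_insert hadj.ne.symm hv

theorem hasCycleLen_four_of_two_edges {a b c d : W} {S : Finset W} (hab : G.Adj a b)
    (hcd : G.Adj c d) (hac : a ≠ c) (had : a ≠ d) (hbc : b ≠ c) (hbd : b ≠ d)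
    (hS : Disjoint S {a, b, c, d})
    (hI : ∀ x ∈ ({a, b} : Finset W), ∀ y ∈ ({c, d} : Finset W),
      TSVert G k (insert x (insert y S))) :
    HasCycleLen (TS G k) 4 := by
  have notMem : ∀ x ∈ ({a, b, c, d} : Finset W), x ∉ S :=
    fun x hx => Finset.disjoint_right.1 hS hx
  have ha := notMem a (by simp); have hb := notMem b (by simp)
  have hc := notMem c (by simp); have hd := notMem d (by simp)
  let Iac : {I : Finset W // TSVert G k I} := ⟨_, hI a (by simp) c (by simp)⟩
  let Ibc : {I : Finset W // TSVert G k I} := ⟨_, hI b (by simp) c (by simp)⟩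
  let Ibd : {I : Finset W // TSVert G k I} := ⟨_, hI b (by simp) d (by simp)⟩
  let Iad : {I : Finset W // TSVert G k I} := ⟨_, hI a (by simp) d (by simp)⟩
  refine hasCycleLen_four_of_adj (a := Iac) (b := Ibc) (c := Ibd) (d := Iad)
    (adj_of_eq_insert hab (T := insert c S) (by simp [hac, ha]) (by simp [hbc, hb]) rfl rfl)
    (adj_of_eq_insert hcd (T := insert b S) (by simp [hbc.symm, hc]) (by simp [hbd.symm, hd])
      (Finset.insert_comm _ _ _) (Finset.insert_comm _ _ _))
    (adj_of_eq_insert hab.symm (T := insert d S) (by simp [hbd, hb]) (by simp [had, ha]) rfl rfl)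
    (adj_of_eq_insert hcd.symm (T := insert a S) (by simp [had.symm, hd])
      (by simp [hac.symm, hc]) (Finset.insert_comm _ _ _) (Finset.insert_comm _ _ _))
    (fun h => ?_) (fun h => ?_)
  · have : a ∈ Ibd.1 := h ▸ Finset.mem_insert_self _ _
    simp [Ibd, hab.ne, had, ha] at this
  · have : b ∈ Iad.1 := h ▸ Finset.mem_insert_self _ _
    simp [Iad, hab.ne.symm, hbd, hb] at this

end TS

namespace D

def pos {r n s : ℕ} : Fin r ⊕ Fin n ⊕ Fin s → ℕ
  | .inl _ => 0
  | .inr (.inl i) => i + 1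
  | .inr (.inr _) => n + 1

variable {r n s : ℕ}

theorem adj_iff (hn : 1 ≤ n) {x y : Fin r ⊕ Fin n ⊕ Fin s} :
    (D r n s).Adj x y ↔ pos x + 1 = pos y ∨ pos y + 1 = pos x := by
  rcases x with a | i | b <;> rcases y with a' | j | b' <;>
    simp [D, pos, fromRel_adj] <;> (try rw [← Fin.val_inj]) <;> omega

theorem pos_le (x : Fin r ⊕ Fin n ⊕ Fin s) : pos x ≤ n + 1 := by
  rcases x with a | i | b <;> simp [pos]

theorem eq_of_pos_eq {x y : Fin 1 ⊕ Fin n ⊕ Fin s} (h : pos x = pos y) (hx : pos x ≤ n) :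
    x = y := by
  rcases x with a | i | b <;> rcases y with a' | j | b' <;>
    simp [pos, Fin.ext_iff] at h hx ⊢ <;> omega

theorem tsVert_insert_insert {k : ℕ} (hk : 2 ≤ k) (hn : 2 * k - 1 ≤ n)
    {S : Finset (Fin r ⊕ Fin n ⊕ Fin s)} (hcard : S.card = k - 2)
    (hS : ∀ t ∈ S, ∃ j < k - 2, pos t = 2 * j + 3) {x y : Fin r ⊕ Fin n ⊕ Fin s}
    (hx : pos x ≤ 1) (hy : n ≤ pos y) : TSVert (D r n s) k (insert x (insert y S)) := by
  have hyS : y ∉ S := fun h => by obtain ⟨j, hj, e⟩ := hS y h; omega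
  have hxS : x ∉ insert y S := by
    rw [Finset.mem_insert, not_or]
    exact ⟨fun e => by rw [e] at hx; omega, fun h => by obtain ⟨j, hj, e⟩ := hS x h; omega⟩
  have hpos : ∀ t ∈ insert x (insert y S),
      pos t = pos x ∨ pos t = pos y ∨ ∃ j < k - 2, pos t = 2 * j + 3 := by
    intro t ht
    rcases Finset.mem_insert.1 ht with rfl | ht
    · exact .inl rfl
    rcases Finset.mem_insert.1 ht with rfl | ht
    · exact .inr (.inl rfl)
    · exact .inr (.inr (hS t ht))
  refine ⟨?_, fun t ht t' ht' => ?_⟩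
  · rw [Finset.card_insert_of_notMem hxS, Finset.card_insert_of_notMem hyS, hcard]
    omega
  · rw [adj_iff (by omega)]
    rcases hpos t ht with h | h | ⟨j, hj, h⟩ <;>
      rcases hpos t' ht' with h' | h' | ⟨j', hj', h'⟩ <;> omega

theorem hasCycleLen_four_TS {k : ℕ} (hr : 1 ≤ r) (hs : 1 ≤ s) (hk : 2 ≤ k)
    (hn : 2 * k - 1 ≤ n) : HasCycleLen (TS (D r n s) k) 4 := by
  have ne_of_pos : ∀ {x y : Fin r ⊕ Fin n ⊕ Fin s}, pos x ≠ pos y → x ≠ y :=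
    fun h e => h (congrArg pos e)
  let a : Fin r ⊕ Fin n ⊕ Fin s := .inl ⟨0, hr⟩
  let b : Fin r ⊕ Fin n ⊕ Fin s := .inr (.inl ⟨0, by omega⟩)
  let c : Fin r ⊕ Fin n ⊕ Fin s := .inr (.inl ⟨n - 1, by omega⟩)
  let d : Fin r ⊕ Fin n ⊕ Fin s := .inr (.inr ⟨0, hs⟩)
  let f : Fin (k - 2) ↪ Fin r ⊕ Fin n ⊕ Fin s :=
    ⟨fun j => .inr (.inl ⟨2 * j + 2, by omega⟩),
      fun i j h => by simpa [Fin.ext_iff] using h⟩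
  let S := Finset.univ.map f
  have hS : ∀ x ∈ S, ∃ j < k - 2, pos x = 2 * j + 3 := by
    simp only [S, Finset.mem_map, Finset.mem_univ, true_and, forall_exists_index]
    rintro _ j rfl
    exact ⟨j, j.isLt, rfl⟩
  have hab : (D r n s).Adj a b := (adj_iff (by omega)).2 (by simp [a, b, pos])
  have hcd : (D r n s).Adj c d := (adj_iff (by omega)).2 (by simp only [c, d, pos]; omega)
  refine TS.hasCycleLen_four_of_two_edges (S := S) hab hcd
    (ne_of_pos (by simp only [a, c, pos]; omega)) (ne_of_pos (by simp only [a, d, pos]; omega))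
    (ne_of_pos (by simp only [b, c, pos]; omega)) (ne_of_pos (by simp only [b, d, pos]; omega))
    (Finset.disjoint_left.2 fun x hx hx' => ?_)
    (fun x hx y hy => tsVert_insert_insert hk hn (by simp [S]) hS ?_ ?_)
  · obtain ⟨j, hj, hpos⟩ := hS x hx
    simp only [Finset.mem_insert, Finset.mem_singleton] at hx'
    rcases hx' with rfl | rfl | rfl | rfl <;> simp [a, b, c, d, pos] at hpos <;> omega
  · simp only [Finset.mem_insert, Finset.mem_singleton] at hx
    rcases hx with rfl | rfl <;> simp [a, b, pos]
  · simp only [Finset.mem_insert, Finset.mem_singleton] at hy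
    rcases hy with rfl | rfl <;> simp only [c, d, pos] <;> omega

/-- Height decreases along the path towards position `0`, except on the edges at the hub
`p_{n-1}` (position `n`), which all point into the hub. -/
def height {r n s : ℕ} (x : Fin r ⊕ Fin n ⊕ Fin s) : ℕ :=
  if pos x = n then 0 else pos x + 1

theorem height_ne (hn : 1 ≤ n) {x y : Fin r ⊕ Fin n ⊕ Fin s} (h : (D r n s).Adj x y) :
    height x ≠ height y := by
  rw [adj_iff hn] at h
  unfold height
  split_ifs <;> omega

theorem pos_of_height_lt (hn : 1 ≤ n) {u v : Fin r ⊕ Fin n ⊕ Fin s} (h : (D r n s).Adj u v)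
    (hlt : height v < height u) : (pos v + 1 = pos u ∧ pos u < n) ∨ pos v = n := by
  rw [adj_iff hn] at h
  have := pos_le u
  unfold height at hlt
  split_ifs at hlt <;> omega

theorem far_of_isSlide (hn : 1 ≤ n) {I : Finset (Fin 1 ⊕ Fin n ⊕ Fin s)}
    {u v t : Fin 1 ⊕ Fin n ⊕ Fin s} (h : IsSlide (D 1 n s) I u v) (hv : pos v ≤ n)
    (ht : t ∈ I) (htu : t ≠ u) : pos t + 1 < pos v ∨ pos v + 1 < pos t := by
  have hadj := h.2.2.2 t ht htu
  rw [adj_iff hn] at hadj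
  have : pos t ≠ pos v := fun e => h.2.2.1 (eq_of_pos_eq e.symm hv ▸ ht)
  omega

theorem far_of_independent (hn : 1 ≤ n) {I : Finset (Fin 1 ⊕ Fin n ⊕ Fin s)}
    (hI : ∀ x ∈ I, ∀ y ∈ I, ¬ (D 1 n s).Adj x y) {t t' : Fin 1 ⊕ Fin n ⊕ Fin s}
    (ht : t ∈ I) (ht' : t' ∈ I) (hne : t ≠ t') :
    pos t + 1 < pos t' ∨ pos t' + 1 < pos t ∨ pos t = n + 1 ∧ pos t' = n + 1 := by
  have hadj := hI t ht t' ht'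
  rw [adj_iff hn] at hadj
  have := pos_le t
  have : pos t = pos t' → n < pos t := fun e => not_le.1 fun h => hne (eq_of_pos_eq e h)
  omega

/-- A height-decreasing slide clears its target and the target's other neighbours; two
different ones leave no room for `k` independent tokens when `n < 2k - 1` and `k ≤ 3`. -/
theorem eq_of_isSlide_of_height_lt {k : ℕ} (hn : 1 ≤ n) (hk : k ≤ 3) (hnk : n < 2 * k - 1)
    {I : Finset (Fin 1 ⊕ Fin n ⊕ Fin s)} (hI : TSVert (D 1 n s) k I)
    {u₁ v₁ u₂ v₂ : Fin 1 ⊕ Fin n ⊕ Fin s} (h₁ : IsSlide (D 1 n s) I u₁ v₁)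
    (h₂ : IsSlide (D 1 n s) I u₂ v₂) (hl₁ : height v₁ < height u₁)
    (hl₂ : height v₂ < height u₂) : u₁ = u₂ ∧ v₁ = v₂ := by
  obtain ⟨hcard, hind⟩ := hI
  have := pos_of_height_lt hn h₁.1 hl₁
  have := pos_of_height_lt hn h₂.1 hl₂
  have := (adj_iff hn).1 h₁.1
  have := (adj_iff hn).1 h₂.1
  have hv₁ : pos v₁ ≤ n := by omega
  have hv₂ : pos v₂ ≤ n := by omega
  by_contra hne
  by_cases hu : u₁ = u₂
  · subst hu
    have : pos v₁ ≠ pos v₂ := fun e => hne ⟨rfl, eq_of_pos_eq e hv₁⟩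
    obtain ⟨t, ht, htu⟩ := I.exists_mem_ne (by omega) u₁
    have := far_of_isSlide hn h₁ hv₁ ht htu
    have := far_of_isSlide hn h₂ hv₂ ht htu
    have := pos_le t
    rcases (show k = 2 ∨ k = 3 by omega) with rfl | rfl
    · omega
    obtain ⟨t', ht', ht't⟩ := (I.erase u₁).exists_mem_ne
      (by rw [Finset.card_erase_of_mem h₁.2.1]; omega) t
    obtain ⟨ht'u, ht'⟩ := Finset.mem_erase.1 ht'
    have := far_of_isSlide hn h₁ hv₁ ht' ht'u
    have := far_of_isSlide hn h₂ hv₂ ht' ht'u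
    have := far_of_independent hn hind ht ht' (Ne.symm ht't)
    have := pos_le t'
    omega
  · have := far_of_isSlide hn h₁ hv₁ h₂.2.1 (Ne.symm hu)
    have := far_of_isSlide hn h₂ hv₂ h₁.2.1 hu
    have := far_of_independent hn hind h₁.2.1 h₂.2.1 hu
    rcases (show k = 2 ∨ k = 3 by omega) with rfl | rfl
    · omega
    obtain ⟨t, ht, htu₂⟩ := (I.erase u₁).exists_mem_ne
      (by rw [Finset.card_erase_of_mem h₁.2.1]; omega) u₂
    obtain ⟨htu₁, ht⟩ := Finset.mem_erase.1 ht
    have := far_of_isSlide hn h₁ hv₁ ht htu₁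
    have := far_of_isSlide hn h₂ hv₂ ht htu₂
    have := far_of_independent hn hind ht h₁.2.1 htu₁
    have := far_of_independent hn hind ht h₂.2.1 htu₂
    have := pos_le t
    omega

theorem isAcyclic_TS {k : ℕ} (hn : 1 ≤ n) (hk : k ≤ 3) (hnk : n < 2 * k - 1) :
    (TS (D 1 n s) k).IsAcyclic := by
  refine isAcyclic_of_lower_neighbor_unique (fun I => ∑ x ∈ I.1, height x)
    (fun I J h => ?_) (fun I J₁ J₂ h₁ h₂ hl₁ hl₂ => ?_)
  · obtain ⟨u, v, hs, hJ⟩ := TS.exists_isSlide_of_adj h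
    have e := Finset.sum_insert_erase_add height hs.2.1 hs.2.2.1
    rw [← hJ] at e
    have := height_ne hn hs.1
    omega
  · obtain ⟨u₁, v₁, hs₁, hJ₁⟩ := TS.exists_isSlide_of_adj h₁
    obtain ⟨u₂, v₂, hs₂, hJ₂⟩ := TS.exists_isSlide_of_adj h₂
    have e₁ := Finset.sum_insert_erase_add height hs₁.2.1 hs₁.2.2.1
    have e₂ := Finset.sum_insert_erase_add height hs₂.2.1 hs₂.2.2.1
    rw [← hJ₁] at e₁
    rw [← hJ₂] at e₂
    obtain ⟨rfl, rfl⟩ :=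
      eq_of_isSlide_of_height_lt hn hk hnk I.2 hs₁ hs₂ (by omega) (by omega)
    exact Subtype.ext (hJ₁.trans hJ₂.symm)

end D

theorem stmt2 (k n s : ℕ) (hk : k = 2 ∨ k = 3) (hn : 1 ≤ n) (hs : 1 ≤ s) :
    (2 * k - 1 ≤ n → HasCycleLen (TS (D 1 n s) k) 4) ∧
    (n < 2 * k - 1 → (TS (D 1 n s) k).IsAcyclic) :=
  ⟨fun h => D.hasCycleLen_four_TS le_rfl hs (by omega) h,
    fun h => D.isAcyclic_TS hn (by omega) h⟩
end

section
/- For k ≥ 4 and any forest F: if F contains 2K_2 + (k−2)K_1, or D_{2,2,2} + (k−2)K_1, or D_{2,4,2} + (k−3)K_1 as an induced subgraph, then TS_k(F) contains a cycle. -/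
open SimpleGraph

/-!
If `H + mK₁` is an induced subgraph of `F`, then sliding tokens inside the copy of `H` while
`m` further tokens stay parked on the isolated vertices embeds `TS_j(H)` into `TS_{j+m}(F)`.
So it suffices to exhibit cycles in `TS_2(2K₂)`, `TS_2(D_{2,2,2})` and `TS_3(D_{2,4,2})`, of
lengths 4, 8 and 12; these are checked by computation.
-/

lemma disjUnion'_eq_sum {α β : Type*} (G : SimpleGraph α) (H : SimpleGraph β) :
    disjUnion' G H = G ⊕g H := by
  ext (a | a) (b | b)
  · simpa [disjUnion', G.adj_comm b a] using fun h => h.ne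
  · simp [disjUnion']
  · simp [disjUnion']
  · simpa [disjUnion', H.adj_comm b a] using fun h => h.ne

section TokenSliding

variable {α β : Type*} {G : SimpleGraph α} {F : SimpleGraph β} {j k : ℕ}

lemma TS_adj_iff [DecidableEq α] {I J : {I : Finset α // TSVert G k I}} :
    (TS G k).Adj I J ↔ ∃ u v, I.1 \ J.1 = {u} ∧ J.1 \ I.1 = {v} ∧ G.Adj u v := by
  simp only [TS, fromRel_adj, ← Finset.coe_sdiff, Finset.coe_eq_singleton]
  constructor
  · rintro ⟨-, h | ⟨u, v, hu, hv, huv⟩⟩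
    · exact h
    · exact ⟨v, u, hv, hu, huv.symm⟩
  · rintro ⟨u, v, hu, hv, huv⟩
    refine ⟨?_, .inl ⟨u, v, hu, hv, huv⟩⟩
    rintro rfl
    simp at hu

lemma TS_isContained_of_sdiff_eq_map [DecidableEq α] [DecidableEq β] (φ : Finset α → Finset β)
    (f : α ↪ β) (hf : ∀ u v, G.Adj u v → F.Adj (f u) (f v))
    (hvert : ∀ I, TSVert G j I → TSVert F k (φ I))
    (hsdiff : ∀ I J, φ I \ φ J = (I \ J).map f) :
    TS G j ⊑ TS F k := by
  have hφ : Function.Injective φ := fun I J h => by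
    have h₁ := hsdiff I J
    have h₂ := hsdiff J I
    rw [h, Finset.sdiff_self, eq_comm, Finset.map_eq_empty, Finset.sdiff_eq_empty_iff_subset]
      at h₁ h₂
    exact h₁.antisymm h₂
  refine ⟨⟨fun I => ⟨φ I, hvert I I.2⟩, fun {I J} hIJ => ?_⟩,
    fun I J h => Subtype.ext (hφ (congrArg Subtype.val h))⟩
  obtain ⟨u, v, hu, hv, huv⟩ := TS_adj_iff.mp hIJ
  exact TS_adj_iff.mpr ⟨f u, f v, by simp [hsdiff, hu], by simp [hsdiff, hv], hf u v huv⟩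

lemma TSVert.map {I : Finset α} (hI : TSVert G k I) (f : G ↪g F) :
    TSVert F k (I.map f.toEmbedding) := by
  refine ⟨by simp [hI.1], ?_⟩
  simp only [Finset.mem_map]
  rintro _ ⟨x, hx, rfl⟩ _ ⟨y, hy, rfl⟩
  simpa using hI.2 x hx y hy

lemma TS_isContained_of_embedding [DecidableEq α] [DecidableEq β] (f : G ↪g F) :
    TS G k ⊑ TS F k :=
  TS_isContained_of_sdiff_eq_map (·.map f.toEmbedding) f.toEmbedding
    (fun _ _ => f.map_adj_iff.mpr) (fun _ hI => hI.map f) (fun _ _ => (Finset.map_sdiff ..).symm)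

lemma TSVert.disjSum {γ : Type*} {K : SimpleGraph γ} {I : Finset α} {S : Finset γ} {m : ℕ}
    (hI : TSVert G j I) (hS : TSVert K m S) : TSVert (G ⊕g K) (j + m) (I.disjSum S) := by
  refine ⟨by simp [hI.1, hS.1], ?_⟩
  simp only [Finset.mem_disjSum]
  rintro _ (⟨x, hx, rfl⟩ | ⟨s, hs, rfl⟩) _ (⟨y, hy, rfl⟩ | ⟨t, ht, rfl⟩)
  · simpa using hI.2 x hx y hy
  · simp
  · simp
  · simpa using hS.2 s hs t ht

lemma TS_isContained_sum [DecidableEq α] {γ : Type*} [DecidableEq γ] (K : SimpleGraph γ)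
    {S : Finset γ} {m : ℕ} (hS : TSVert K m S) : TS G j ⊑ TS (G ⊕g K) (j + m) :=
  TS_isContained_of_sdiff_eq_map (·.disjSum S) .inl (fun _ _ => sum_adj_inl.mpr)
    (fun _ hI => hI.disjSum hS) (fun I J => by ext (x | x) <;> simp)

lemma TS_isContained_of_embedding_disjUnion' {γ : Type*} {K : SimpleGraph γ}
    (e : disjUnion' G K ↪g F) {S : Finset γ} {m : ℕ} (hS : TSVert K m S) (hk : j + m = k) :
    TS G j ⊑ TS F k := by
  classical
  rw [disjUnion'_eq_sum] at e
  exact hk ▸ (TS_isContained_sum K hS).trans (TS_isContained_of_embedding e)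

lemma TSVert_nK1_univ (m : ℕ) : TSVert (nK1 m) m Finset.univ :=
  ⟨by simp, by simp [nK1]⟩

lemma cycleGraph_isContained_TS [DecidableEq α] {n : ℕ} (c : Fin n → Finset α)
    (hvert : ∀ i, TSVert G k (c i)) (hinj : Function.Injective c)
    (hslide : ∀ i i', (cycleGraph n).Adj i i' →
      ∃ u v, c i \ c i' = {u} ∧ c i' \ c i = {v} ∧ G.Adj u v) :
    cycleGraph n ⊑ TS G k :=
  ⟨⟨fun i => ⟨c i, hvert i⟩, fun {i i'} h => TS_adj_iff.mpr (hslide i i' h)⟩,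
    fun _ _ h => hinj (congrArg Subtype.val h)⟩

lemma hasCycle_of_cycleGraph_isContained {n : ℕ} (hn : 3 ≤ n) (h : cycleGraph n ⊑ G) :
    HasCycle G :=
  let ⟨v, p, hp, _⟩ := (cycleGraph_isContained_iff hn).mp h
  ⟨v, p, hp⟩

lemma hasCycle_TS_of_embedding_disjUnion'_nK1 {n m : ℕ} (hn : 3 ≤ n)
    (hc : cycleGraph n ⊑ TS G j) (he : Nonempty (disjUnion' G (nK1 m) ↪g F)) (hk : j + m = k) :
    HasCycle (TS F k) :=
  let ⟨e⟩ := he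
  hasCycle_of_cycleGraph_isContained hn <|
    hc.trans <| TS_isContained_of_embedding_disjUnion' e (TSVert_nK1_univ m) hk

end TokenSliding

instance {α : Type*} (G : SimpleGraph α) [DecidableRel G.Adj] (k : ℕ) :
    DecidablePred (TSVert G k) := fun _ => inferInstanceAs (Decidable (_ ∧ _))

instance : DecidableRel twoK2.Adj := fun a b =>
  decidable_of_iff _ (fromRel_adj _ a b).symm

set_option synthInstance.maxSize 1000 in
instance (r n s : ℕ) : DecidableRel (D r n s).Adj := fun a b =>
  decidable_of_iff _ (fromRel_adj _ a b).symm

lemma cycleGraph_isContained_TS_twoK2 : cycleGraph 4 ⊑ TS twoK2 2 :=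
  cycleGraph_isContained_TS ![{0, 2}, {1, 2}, {1, 3}, {0, 3}] (by decide) (by decide) (by decide)

lemma cycleGraph_isContained_TS_D222 : cycleGraph 8 ⊑ TS (D 2 2 2) 2 :=
  let u i : Fin 2 ⊕ Fin 2 ⊕ Fin 2 := .inl i
  let p i : Fin 2 ⊕ Fin 2 ⊕ Fin 2 := .inr (.inl i)
  let v i : Fin 2 ⊕ Fin 2 ⊕ Fin 2 := .inr (.inr i)
  cycleGraph_isContained_TS
    ![{u 0, v 0}, {p 0, v 0}, {u 1, v 0}, {u 1, p 1}, {u 1, v 1}, {p 0, v 1}, {u 0, v 1}, {u 0, p 1}]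
    (by decide) (by decide) (by decide)

lemma cycleGraph_isContained_TS_D242 : cycleGraph 12 ⊑ TS (D 2 4 2) 3 :=
  let u i : Fin 2 ⊕ Fin 4 ⊕ Fin 2 := .inl i
  let p i : Fin 2 ⊕ Fin 4 ⊕ Fin 2 := .inr (.inl i)
  let v i : Fin 2 ⊕ Fin 4 ⊕ Fin 2 := .inr (.inr i)
  cycleGraph_isContained_TS
    ![{p 1, u 1, v 1}, {p 2, u 1, v 1}, {p 0, p 2, v 1}, {p 2, u 0, v 1},
      {p 1, u 0, v 1}, {p 1, p 3, u 0}, {p 1, u 0, v 0}, {p 2, u 0, v 0},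
      {p 0, p 2, v 0}, {p 2, u 1, v 0}, {p 1, u 1, v 0}, {p 1, p 3, u 1}]
    (by decide) (by decide) (by decide)

theorem stmt10_general {V : Type*} (k : ℕ) (hk : 4 ≤ k)
    (F : SimpleGraph V)
    (h : Nonempty (disjUnion' twoK2 (nK1 (k - 2)) ↪g F) ∨
      Nonempty (disjUnion' (D 2 2 2) (nK1 (k - 2)) ↪g F) ∨
      Nonempty (disjUnion' (D 2 4 2) (nK1 (k - 3)) ↪g F)) :
    HasCycle (TS F k) := by
  rcases h with he | he | he
  · exact hasCycle_TS_of_embedding_disjUnion'_nK1 (by norm_num) cycleGraph_isContained_TS_twoK2 he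
      (by omega)
  · exact hasCycle_TS_of_embedding_disjUnion'_nK1 (by norm_num) cycleGraph_isContained_TS_D222 he
      (by omega)
  · exact hasCycle_TS_of_embedding_disjUnion'_nK1 (by norm_num) cycleGraph_isContained_TS_D242 he
      (by omega)

theorem stmt10 {V : Type*} [Fintype V] (k : ℕ) (hk : 4 ≤ k)
    (F : SimpleGraph V) (hF : F.IsAcyclic)
    (h : Nonempty (disjUnion' twoK2 (nK1 (k - 2)) ↪g F) ∨
      Nonempty (disjUnion' (D 2 2 2) (nK1 (k - 2)) ↪g F) ∨
      Nonempty (disjUnion' (D 2 4 2) (nK1 (k - 3)) ↪g F)) :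
    HasCycle (TS F k) :=
  stmt10_general k hk F h
end

section
/- Let G_1 and G_2 be graphs whose vertex sets intersect in a set W inducing the same subgraph H in both, and let H(G_1,G_2) be the graph on V(G_1) ∪ V(G_2) whose edges are E(G_1) ∪ E(G_2) together with all edges between V(G_1)∖W and V(G_2)∖W. Then for k ≥ 2, every independent set of size k in H(G_1,G_2) is an independent set of G_1 or of G_2, and TS_k(H(G_1,G_2)) is the union of TS_k(G_1), TS_k(G_2), and the edges S_1S_2 over all pairs of size-k independent sets S_1 of G_1, S_2 of G_2 satisfying |S_1 ∩ W| = |S_2 ∩ W| = |S_1 ∩ S_2| = k−1. -/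
open SimpleGraph

/-- `I` is a size-`k` independent set of the labelled graph `G` with vertex set `Vs`. -/
def IsIndepK {W : Type*} (G : SimpleGraph W) (Vs : Set W) (k : ℕ) (I : Finset W) : Prop :=
  (I : Set W) ⊆ Vs ∧ I.card = k ∧ ∀ u ∈ I, ∀ v ∈ I, ¬ G.Adj u v

/-- Token-sliding adjacency between size-`k` independent sets of the labelled graph `G`
with vertex set `Vs`. -/
def TSAdj {W : Type*} (G : SimpleGraph W) (Vs : Set W) (k : ℕ) (I J : Finset W) : Prop :=
  IsIndepK G Vs k I ∧ IsIndepK G Vs k J ∧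
    ∃ u v, (I : Set W) \ (J : Set W) = {u} ∧ (J : Set W) \ (I : Set W) = {v} ∧ G.Adj u v

/-- The `H`-join of the labelled graphs `G₁` (vertex set `V₁`) and `G₂` (vertex set `V₂`),
where `H` is the common induced subgraph on `V₁ ∩ V₂`: all edges of `G₁` and `G₂`, plus all
edges between `V₁ \ V₂` and `V₂ \ V₁`. -/
def hJoin {W : Type*} (G₁ G₂ : SimpleGraph W) (V₁ V₂ : Set W) : SimpleGraph W :=
  SimpleGraph.fromRel fun a b =>
    G₁.Adj a b ∨ G₂.Adj a b ∨ (a ∈ V₁ \ V₂ ∧ b ∈ V₂ \ V₁)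

/-- The crossing condition of Proposition 7: `S₁` is a size-`k` independent set of `G₁`,
`S₂` one of `G₂`, and `|S₁ ∩ W| = |S₂ ∩ W| = |S₁ ∩ S₂| = k - 1` where `W = V₁ ∩ V₂`. -/
def Crossing {W : Type*} (G₁ G₂ : SimpleGraph W) (V₁ V₂ : Set W) (k : ℕ)
    (S₁ S₂ : Finset W) : Prop :=
  IsIndepK G₁ V₁ k S₁ ∧ IsIndepK G₂ V₂ k S₂ ∧
    ((S₁ : Set W) ∩ (V₁ ∩ V₂)).ncard = k - 1 ∧
    ((S₂ : Set W) ∩ (V₁ ∩ V₂)).ncard = k - 1 ∧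
    ((S₁ : Set W) ∩ (S₂ : Set W)).ncard = k - 1

/-!
An independent set of the join cannot meet both `V₁ \ V₂` and `V₂ \ V₁`, so it lies in `V₁` or in
`V₂`, on which the join induces `G₁`, resp. `G₂`. Consider a token slide `u → v` of the join from
a set in `V₁` to a set in `V₂`. If `u ∈ V₂` both sets lie in `V₂`, if `v ∈ V₁` both lie in `V₁`;
otherwise the token moves from `V₁ \ V₂` to `V₂ \ V₁`, and the counting condition of `Crossing`
says exactly that the two sets share everything except `u ∈ S₁ \ V₂` and `v ∈ S₂ \ V₁`.
-/

namespace Set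

variable {α : Type*} {s t V : Set α} {u : α}

lemma subset_of_sdiff_eq_singleton (h : s \ t = {u}) (hu : u ∈ V) (ht : t ⊆ V) : s ⊆ V :=
  calc s ⊆ s \ t ∪ t := subset_sdiff_union s t
    _ = insert u t := by rw [h, singleton_union]
    _ ⊆ V := insert_subset hu ht

lemma ncard_inter_add_one_eq_iff (hs : s.Finite) :
    (s ∩ t).ncard + 1 = s.ncard ↔ ∃ u, s \ t = {u} := by
  rw [← ncard_inter_add_ncard_sdiff_eq_ncard s t hs, Nat.add_left_cancel_iff, eq_comm,
    ncard_eq_one]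

lemma inter_eq_inter_iff_of_sdiff_eq_singleton (h : s \ t = {u}) (ht : s ∩ t ⊆ V) :
    s ∩ V = s ∩ t ↔ u ∉ V := by
  have hu : u ∈ s \ t := h.symm.subset (mem_singleton u)
  refine ⟨fun hV huV => hu.2 (hV.subset ⟨hu.1, huV⟩).2, fun huV => ?_⟩
  refine (subset_inter inter_subset_left fun x hx => ?_).antisymm
    (subset_inter inter_subset_left ht)
  by_contra hxt
  exact huV (h.subset ⟨hx.1, hxt⟩ ▸ hx.2)

end Set

section

variable {W : Type*} {G G' G₁ G₂ : SimpleGraph W} {Vs Vs' V₁ V₂ : Set W} {k : ℕ}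
  {I J S₁ S₂ : Finset W} {a b : W}

lemma IsIndepK.mono (h : IsIndepK G Vs k I) (hI : (I : Set W) ⊆ Vs')
    (hadj : ∀ a ∈ I, ∀ b ∈ I, G'.Adj a b → G.Adj a b) : IsIndepK G' Vs' k I :=
  ⟨hI, h.2.1, fun a ha b hb hab => h.2.2 a ha b hb (hadj a ha b hb hab)⟩

lemma IsIndepK.of_le (h : IsIndepK G Vs k I) (hle : G' ≤ G) (hI : (I : Set W) ⊆ Vs') :
    IsIndepK G' Vs' k I :=
  h.mono hI fun _ _ _ _ hab => hle hab

lemma TSAdj.symm (h : TSAdj G Vs k I J) : TSAdj G Vs k J I := by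
  obtain ⟨hI, hJ, u, v, hu, hv, huv⟩ := h
  exact ⟨hJ, hI, v, u, hv, hu, huv.symm⟩

lemma TSAdj.mono (h : TSAdj G Vs k I J) (hI : IsIndepK G' Vs' k I) (hJ : IsIndepK G' Vs' k J)
    (hadj : ∀ a ∈ I, ∀ b ∈ J, G.Adj a b → G'.Adj a b) : TSAdj G' Vs' k I J := by
  obtain ⟨-, -, u, v, hu, hv, huv⟩ := h
  exact ⟨hI, hJ, u, v, hu, hv, hadj u (hu.symm.subset rfl).1 v (hv.symm.subset rfl).1 huv⟩

lemma hJoin_adj : (hJoin G₁ G₂ V₁ V₂).Adj a b ↔ a ≠ b ∧ (G₁.Adj a b ∨ G₂.Adj a b ∨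
    (a ∈ V₁ \ V₂ ∧ b ∈ V₂ \ V₁) ∨ (b ∈ V₁ \ V₂ ∧ a ∈ V₂ \ V₁)) := by
  rw [hJoin, fromRel_adj, G₁.adj_comm b a, G₂.adj_comm b a]
  tauto

lemma hJoin_comm : hJoin G₁ G₂ V₁ V₂ = hJoin G₂ G₁ V₂ V₁ := by
  ext a b
  rw [hJoin_adj, hJoin_adj]
  tauto

lemma le_hJoin_left : G₁ ≤ hJoin G₁ G₂ V₁ V₂ :=
  fun _ _ h => hJoin_adj.2 ⟨h.ne, Or.inl h⟩

lemma le_hJoin_right : G₂ ≤ hJoin G₁ G₂ V₁ V₂ := by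
  rw [hJoin_comm]; exact le_hJoin_left

lemma hJoin_adj_of_mem_sdiff (ha : a ∈ V₁ \ V₂) (hb : b ∈ V₂ \ V₁) :
    (hJoin G₁ G₂ V₁ V₂).Adj a b :=
  hJoin_adj.2 ⟨fun hab => hb.2 (hab ▸ ha.1), Or.inr (Or.inr (Or.inl ⟨ha, hb⟩))⟩

lemma hJoin_adj_iff_left (hE₂ : ∀ a b, G₂.Adj a b → a ∈ V₂ ∧ b ∈ V₂)
    (hcons : ∀ a b, a ∈ V₁ ∩ V₂ → b ∈ V₁ ∩ V₂ → (G₁.Adj a b ↔ G₂.Adj a b))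
    (ha : a ∈ V₁) (hb : b ∈ V₁) : (hJoin G₁ G₂ V₁ V₂).Adj a b ↔ G₁.Adj a b := by
  refine ⟨fun h => ?_, (le_hJoin_left ·)⟩
  obtain ⟨-, h | h | h | h⟩ := hJoin_adj.1 h
  · exact h
  · exact (hcons a b ⟨ha, (hE₂ a b h).1⟩ ⟨hb, (hE₂ a b h).2⟩).2 h
  · exact absurd hb h.2.2
  · exact absurd ha h.2.2

lemma hJoin_adj_iff_right (hE₁ : ∀ a b, G₁.Adj a b → a ∈ V₁ ∧ b ∈ V₁)
    (hcons : ∀ a b, a ∈ V₁ ∩ V₂ → b ∈ V₁ ∩ V₂ → (G₁.Adj a b ↔ G₂.Adj a b))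
    (ha : a ∈ V₂) (hb : b ∈ V₂) : (hJoin G₁ G₂ V₁ V₂).Adj a b ↔ G₂.Adj a b := by
  rw [hJoin_comm]
  exact hJoin_adj_iff_left hE₁ (fun a b ha hb => (hcons a b ha.symm hb.symm).symm) ha hb

lemma subset_or_subset_of_hJoin_indep (hcover : V₁ ∪ V₂ = Set.univ)
    (h : ∀ u ∈ I, ∀ v ∈ I, ¬ (hJoin G₁ G₂ V₁ V₂).Adj u v) :
    (I : Set W) ⊆ V₁ ∨ (I : Set W) ⊆ V₂ := by
  by_contra! ⟨h₁, h₂⟩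
  obtain ⟨x, hxI, hx₁⟩ := Set.not_subset.1 h₁
  obtain ⟨y, hyI, hy₂⟩ := Set.not_subset.1 h₂
  have hmem : ∀ z, z ∈ V₁ ∨ z ∈ V₂ := Set.eq_univ_iff_forall.1 hcover
  exact h y hyI x hxI
    (hJoin_adj_of_mem_sdiff ⟨(hmem y).resolve_right hy₂, hy₂⟩ ⟨(hmem x).resolve_left hx₁, hx₁⟩)

lemma IsIndepK.hJoin_left (hE₂ : ∀ a b, G₂.Adj a b → a ∈ V₂ ∧ b ∈ V₂)
    (hcons : ∀ a b, a ∈ V₁ ∩ V₂ → b ∈ V₁ ∩ V₂ → (G₁.Adj a b ↔ G₂.Adj a b))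
    (h : IsIndepK G₁ V₁ k I) : IsIndepK (hJoin G₁ G₂ V₁ V₂) Set.univ k I :=
  h.mono (Set.subset_univ _) fun _ ha _ hb => (hJoin_adj_iff_left hE₂ hcons (h.1 ha) (h.1 hb)).1

lemma IsIndepK.hJoin_right (hE₁ : ∀ a b, G₁.Adj a b → a ∈ V₁ ∧ b ∈ V₁)
    (hcons : ∀ a b, a ∈ V₁ ∩ V₂ → b ∈ V₁ ∩ V₂ → (G₁.Adj a b ↔ G₂.Adj a b))
    (h : IsIndepK G₂ V₂ k I) : IsIndepK (hJoin G₁ G₂ V₁ V₂) Set.univ k I :=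
  h.mono (Set.subset_univ _) fun _ ha _ hb => (hJoin_adj_iff_right hE₁ hcons (h.1 ha) (h.1 hb)).1

lemma TSAdj.hJoin_left (hE₂ : ∀ a b, G₂.Adj a b → a ∈ V₂ ∧ b ∈ V₂)
    (hcons : ∀ a b, a ∈ V₁ ∩ V₂ → b ∈ V₁ ∩ V₂ → (G₁.Adj a b ↔ G₂.Adj a b))
    (h : TSAdj G₁ V₁ k I J) : TSAdj (hJoin G₁ G₂ V₁ V₂) Set.univ k I J :=
  h.mono (h.1.hJoin_left hE₂ hcons) (h.2.1.hJoin_left hE₂ hcons) fun _ _ _ _ => (le_hJoin_left ·)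

lemma TSAdj.hJoin_right (hE₁ : ∀ a b, G₁.Adj a b → a ∈ V₁ ∧ b ∈ V₁)
    (hcons : ∀ a b, a ∈ V₁ ∩ V₂ → b ∈ V₁ ∩ V₂ → (G₁.Adj a b ↔ G₂.Adj a b))
    (h : TSAdj G₂ V₂ k I J) : TSAdj (hJoin G₁ G₂ V₁ V₂) Set.univ k I J :=
  h.mono (h.1.hJoin_right hE₁ hcons) (h.2.1.hJoin_right hE₁ hcons) fun _ _ _ _ => (le_hJoin_right ·)

lemma TSAdj.restrict_left (hE₂ : ∀ a b, G₂.Adj a b → a ∈ V₂ ∧ b ∈ V₂)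
    (hcons : ∀ a b, a ∈ V₁ ∩ V₂ → b ∈ V₁ ∩ V₂ → (G₁.Adj a b ↔ G₂.Adj a b))
    (h : TSAdj (hJoin G₁ G₂ V₁ V₂) Set.univ k I J) (hI : (I : Set W) ⊆ V₁)
    (hJ : (J : Set W) ⊆ V₁) : TSAdj G₁ V₁ k I J :=
  h.mono (h.1.of_le le_hJoin_left hI) (h.2.1.of_le le_hJoin_left hJ) fun _ ha _ hb =>
    (hJoin_adj_iff_left hE₂ hcons (hI ha) (hJ hb)).1

lemma TSAdj.restrict_right (hE₁ : ∀ a b, G₁.Adj a b → a ∈ V₁ ∧ b ∈ V₁)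
    (hcons : ∀ a b, a ∈ V₁ ∩ V₂ → b ∈ V₁ ∩ V₂ → (G₁.Adj a b ↔ G₂.Adj a b))
    (h : TSAdj (hJoin G₁ G₂ V₁ V₂) Set.univ k I J) (hI : (I : Set W) ⊆ V₂)
    (hJ : (J : Set W) ⊆ V₂) : TSAdj G₂ V₂ k I J :=
  h.mono (h.1.of_le le_hJoin_right hI) (h.2.1.of_le le_hJoin_right hJ) fun _ ha _ hb =>
    (hJoin_adj_iff_right hE₁ hcons (hI ha) (hJ hb)).1

lemma crossing_iff (hk : 1 ≤ k) : Crossing G₁ G₂ V₁ V₂ k S₁ S₂ ↔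
    IsIndepK G₁ V₁ k S₁ ∧ IsIndepK G₂ V₂ k S₂ ∧ ∃ u v, (S₁ : Set W) \ S₂ = {u} ∧
      (S₂ : Set W) \ S₁ = {v} ∧ u ∉ V₂ ∧ v ∉ V₁ := by
  refine and_congr_right fun h₁ => and_congr_right fun h₂ => ?_
  have hW₁ : (S₁ : Set W) ∩ S₂ ⊆ V₁ ∩ V₂ := fun x hx => ⟨h₁.1 hx.1, h₂.1 hx.2⟩
  have hW₂ : (S₂ : Set W) ∩ S₁ ⊆ V₁ ∩ V₂ := fun x hx => ⟨h₁.1 hx.2, h₂.1 hx.1⟩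
  have hcard₁ := Set.ncard_inter_add_one_eq_iff (t := (S₂ : Set W)) S₁.finite_toSet
  have hcard₂ := Set.ncard_inter_add_one_eq_iff (t := (S₁ : Set W)) S₂.finite_toSet
  rw [Set.ncard_coe_finset, h₁.2.1] at hcard₁
  rw [Set.ncard_coe_finset, h₂.2.1, Set.inter_comm] at hcard₂
  constructor
  · rintro ⟨c₁, c₂, c₃⟩
    obtain ⟨u, hu⟩ := hcard₁.1 (by omega)
    obtain ⟨v, hv⟩ := hcard₂.1 (by omega)
    have e₁ : (S₁ : Set W) ∩ (V₁ ∩ V₂) = (S₁ : Set W) ∩ S₂ :=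
      (Set.eq_of_subset_of_ncard_le (Set.subset_inter Set.inter_subset_left hW₁)
        (by rw [c₁, c₃])).symm
    have e₂ : (S₂ : Set W) ∩ (V₁ ∩ V₂) = (S₂ : Set W) ∩ S₁ :=
      (Set.eq_of_subset_of_ncard_le (Set.subset_inter Set.inter_subset_left hW₂)
        (by rw [c₂, Set.inter_comm (S₂ : Set W), c₃])).symm
    have hu' := (Set.inter_eq_inter_iff_of_sdiff_eq_singleton hu hW₁).1 e₁
    have hv' := (Set.inter_eq_inter_iff_of_sdiff_eq_singleton hv hW₂).1 e₂
    exact ⟨u, v, hu, hv, fun hu₂ => hu' ⟨h₁.1 (hu.symm.subset rfl).1, hu₂⟩,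
      fun hv₁ => hv' ⟨hv₁, h₂.1 (hv.symm.subset rfl).1⟩⟩
  · rintro ⟨u, v, hu, hv, hu₂, hv₁⟩
    have c₃ : ((S₁ : Set W) ∩ S₂).ncard = k - 1 := by
      have := hcard₁.2 ⟨u, hu⟩
      omega
    rw [(Set.inter_eq_inter_iff_of_sdiff_eq_singleton hu hW₁).2 (hu₂ ·.2),
      (Set.inter_eq_inter_iff_of_sdiff_eq_singleton hv hW₂).2 (hv₁ ·.1),
      Set.inter_comm (S₂ : Set W)]
    exact ⟨c₃, c₃, c₃⟩

lemma Crossing.tsAdj_hJoin (hk : 1 ≤ k) (hE₁ : ∀ a b, G₁.Adj a b → a ∈ V₁ ∧ b ∈ V₁)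
    (hE₂ : ∀ a b, G₂.Adj a b → a ∈ V₂ ∧ b ∈ V₂)
    (hcons : ∀ a b, a ∈ V₁ ∩ V₂ → b ∈ V₁ ∩ V₂ → (G₁.Adj a b ↔ G₂.Adj a b))
    (h : Crossing G₁ G₂ V₁ V₂ k S₁ S₂) : TSAdj (hJoin G₁ G₂ V₁ V₂) Set.univ k S₁ S₂ := by
  obtain ⟨h₁, h₂, u, v, hu, hv, hu₂, hv₁⟩ := (crossing_iff hk).1 h
  exact ⟨h₁.hJoin_left hE₂ hcons, h₂.hJoin_right hE₁ hcons, u, v, hu, hv,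
    hJoin_adj_of_mem_sdiff ⟨h₁.1 (hu.symm.subset rfl).1, hu₂⟩ ⟨h₂.1 (hv.symm.subset rfl).1, hv₁⟩⟩

lemma TSAdj.of_hJoin_of_subset_left_right (hk : 1 ≤ k)
    (hE₁ : ∀ a b, G₁.Adj a b → a ∈ V₁ ∧ b ∈ V₁) (hE₂ : ∀ a b, G₂.Adj a b → a ∈ V₂ ∧ b ∈ V₂)
    (hcons : ∀ a b, a ∈ V₁ ∩ V₂ → b ∈ V₁ ∩ V₂ → (G₁.Adj a b ↔ G₂.Adj a b))
    (h : TSAdj (hJoin G₁ G₂ V₁ V₂) Set.univ k I J) (hI : (I : Set W) ⊆ V₁)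
    (hJ : (J : Set W) ⊆ V₂) :
    TSAdj G₁ V₁ k I J ∨ TSAdj G₂ V₂ k I J ∨ Crossing G₁ G₂ V₁ V₂ k I J := by
  obtain ⟨u, v, hu, hv, -⟩ := h.2.2
  by_cases hu₂ : u ∈ V₂
  · exact .inr <| .inl <| h.restrict_right hE₁ hcons (Set.subset_of_sdiff_eq_singleton hu hu₂ hJ) hJ
  by_cases hv₁ : v ∈ V₁
  · exact .inl <| h.restrict_left hE₂ hcons hI (Set.subset_of_sdiff_eq_singleton hv hv₁ hI)
  exact .inr <| .inr <| (crossing_iff hk).2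
    ⟨h.1.of_le le_hJoin_left hI, h.2.1.of_le le_hJoin_right hJ, u, v, hu, hv, hu₂, hv₁⟩

end

theorem stmt11 {W : Type*} (G₁ G₂ : SimpleGraph W) (V₁ V₂ : Set W) (k : ℕ) (hk : 2 ≤ k)
    (hE₁ : ∀ a b, G₁.Adj a b → a ∈ V₁ ∧ b ∈ V₁)
    (hE₂ : ∀ a b, G₂.Adj a b → a ∈ V₂ ∧ b ∈ V₂)
    (hcover : V₁ ∪ V₂ = Set.univ)
    (hcons : ∀ a b, a ∈ V₁ ∩ V₂ → b ∈ V₁ ∩ V₂ → (G₁.Adj a b ↔ G₂.Adj a b)) :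
    (∀ I : Finset W, I.card = k → (∀ u ∈ I, ∀ v ∈ I, ¬ (hJoin G₁ G₂ V₁ V₂).Adj u v) →
      IsIndepK G₁ V₁ k I ∨ IsIndepK G₂ V₂ k I) ∧
    (∀ I J : Finset W, TSAdj (hJoin G₁ G₂ V₁ V₂) Set.univ k I J ↔
      (TSAdj G₁ V₁ k I J ∨ TSAdj G₂ V₂ k I J ∨
        Crossing G₁ G₂ V₁ V₂ k I J ∨ Crossing G₁ G₂ V₁ V₂ k J I)) := by
  have hk₁ : 1 ≤ k := by omega
  refine ⟨fun I hI h => ?_, fun I J => ⟨fun h => ?_, ?_⟩⟩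
  · have hI' : IsIndepK (hJoin G₁ G₂ V₁ V₂) Set.univ k I := ⟨Set.subset_univ _, hI, h⟩
    exact (subset_or_subset_of_hJoin_indep hcover h).imp
      (hI'.of_le le_hJoin_left) (hI'.of_le le_hJoin_right)
  · rcases subset_or_subset_of_hJoin_indep hcover h.1.2.2 with hI | hI <;>
      rcases subset_or_subset_of_hJoin_indep hcover h.2.1.2.2 with hJ | hJ
    · exact .inl (h.restrict_left hE₂ hcons hI hJ)
    · exact (h.of_hJoin_of_subset_left_right hk₁ hE₁ hE₂ hcons hI hJ).imp_right (.imp_right .inl)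
    · rcases h.symm.of_hJoin_of_subset_left_right hk₁ hE₁ hE₂ hcons hJ hI with h' | h' | h'
      exacts [.inl h'.symm, .inr (.inl h'.symm), .inr (.inr (.inr h'))]
    · exact .inr (.inl (h.restrict_right hE₁ hcons hI hJ))
  · rintro (h | h | h | h)
    · exact h.hJoin_left hE₂ hcons
    · exact h.hJoin_right hE₁ hcons
    · exact h.tsAdj_hJoin hk₁ hE₁ hE₂ hcons
    · exact (h.tsAdj_hJoin hk₁ hE₁ hE₂ hcons).symm
end

section
/- For 1 ≤ r ≤ s and k ≥ 2, the double star D_{r,2,s} (an edge p_1p_2 with r leaves attached to p_1 and s leaves attached to p_2) is isomorphic to TS_k(G) for some graph G if and only if s ≤ k − 1. -/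
open SimpleGraph

/-!
If `TS_k(G) ≅ D_{r,2,s}`, let `I` be the independent set at the centre `p₂`; its `s + 1`
neighbours are pairwise non-adjacent and each is obtained by sliding one token `x` of `I` to
some `y`. If two of them slid the same token, then, since `k ≥ 2`, performing both slides at
once and giving up a third token yields an independent set at distance at least three from `I`.
Every vertex of the double star is within distance two of `p₂`, so the `s + 1` slides move
distinct tokens of `I` and `s + 1 ≤ k`.

Conversely, for `k = m + 1` with `r, s ≤ m`, take adjacent poles `pole 0`, `pole 1`, idle
vertices `idle j` (`j < m`) forming the set `A`, and a clique of leaf vertices `leafL i`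
(`i < r`) and `leafR i` (`i < s`), where `leafL i` is adjacent to `pole 1` and `idle i`, and
`leafR i` to `pole 0` and `idle i`. The independent `(m + 1)`-sets are `{pole t} ∪ A`,
`{pole 0, leafL i} ∪ A - idle i` and `{pole 1, leafR i} ∪ A - idle i`, and the token slides
between them are exactly the edges of `D_{r,2,s}`.
-/

namespace TS

variable {W : Type*} {G : SimpleGraph W} {k : ℕ}

section

variable [DecidableEq W]

theorem adj_iff {I J : {I : Finset W // TSVert G k I}} :
    (TS G k).Adj I J ↔ ∃ x y, I.1 \ J.1 = {x} ∧ J.1 \ I.1 = {y} ∧ G.Adj x y := by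
  simp only [TS, fromRel_adj, ← Finset.coe_sdiff, Finset.coe_eq_singleton]
  constructor
  · rintro ⟨-, h | ⟨x, y, hxy, hyx, hadj⟩⟩
    exacts [h, ⟨y, x, hyx, hxy, hadj.symm⟩]
  · rintro ⟨x, y, hxy, hyx, hadj⟩
    refine ⟨?_, Or.inl ⟨x, y, hxy, hyx, hadj⟩⟩
    rintro rfl
    simp at hxy

theorem adj_of_adj_of_mem_sdiff {I J : {I : Finset W // TSVert G k I}} {a b : W}
    (h : (TS G k).Adj I J) (ha : a ∈ I.1 \ J.1) (hb : b ∈ J.1 \ I.1) : G.Adj a b := by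
  obtain ⟨x, y, hx, hy, hxy⟩ := adj_iff.mp h
  rw [hx, Finset.mem_singleton] at ha
  rw [hy, Finset.mem_singleton] at hb
  rwa [ha, hb]

theorem not_eq_or_adj_of_mem_sdiff {I J : {I : Finset W // TSVert G k I}}
    {a b : W} (hab : a ≠ b) (ha : a ∈ J.1 \ I.1) (hb : b ∈ J.1 \ I.1) :
    ¬ (I = J ∨ (TS G k).Adj I J) := by
  rintro (rfl | h)
  · simp at ha
  · obtain ⟨x, y, -, hy, -⟩ := adj_iff.mp h
    rw [hy, Finset.mem_singleton] at ha hb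
    exact hab (ha.trans hb.symm)

theorem exists_slide_of_adj {I J : {I : Finset W // TSVert G k I}}
    (h : (TS G k).Adj I J) :
    ∃ x y, x ∈ I.1 ∧ y ∉ I.1 ∧ G.Adj x y ∧ J.1 = insert y (I.1.erase x) := by
  obtain ⟨x, y, hx, hy, hxy⟩ := adj_iff.mp h
  have hx' := Finset.ext_iff.mp hx
  have hy' := Finset.ext_iff.mp hy
  simp only [Finset.mem_sdiff, Finset.mem_singleton] at hx' hy'
  refine ⟨x, y, ((hx' x).mpr rfl).1, ((hy' y).mpr rfl).2, hxy, ?_⟩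
  ext z
  simp only [Finset.mem_insert, Finset.mem_erase]
  grind

theorem adj_of_slide {I J : {I : Finset W // TSVert G k I}} {x y : W}
    (hx : x ∈ I.1) (hy : y ∉ I.1) (hxy : G.Adj x y) (hJ : J.1 = insert y (I.1.erase x)) :
    (TS G k).Adj I J := by
  refine adj_iff.mpr ⟨x, y, ?_, ?_, hxy⟩ <;>
  · ext z
    simp only [hJ, Finset.mem_sdiff, Finset.mem_insert, Finset.mem_erase, Finset.mem_singleton]
    grind [G.ne_of_adj hxy]

theorem _root_.TSVert.insert_erase {I : Finset W} {x y : W} (hI : TSVert G k I)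
    (hx : x ∈ I) (hy : y ∉ I) (hind : ∀ z ∈ I.erase x, ¬ G.Adj y z) :
    TSVert G k (insert y (I.erase x)) := by
  refine ⟨?_, ?_⟩
  · rw [Finset.card_insert_of_notMem (fun h => hy (Finset.mem_of_mem_erase h)),
      Finset.card_erase_of_mem hx, ← hI.1]
    have := Finset.card_pos.mpr ⟨x, hx⟩
    omega
  · simp only [Finset.mem_insert]
    rintro a (rfl | ha) b (rfl | hb)
    · exact G.loopless.irrefl _
    · exact hind b hb
    · exact fun h => hind a ha h.symm
    · exact hI.2 a (Finset.mem_of_mem_erase ha) b (Finset.mem_of_mem_erase hb)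

theorem eq_of_slide_target {I J₁ J₂ : {I : Finset W // TSVert G k I}}
    {x₁ x₂ y : W} (hx₂ : x₂ ∈ I.1) (hadj : G.Adj x₂ y)
    (h₁ : J₁.1 = insert y (I.1.erase x₁)) (h₂ : J₂.1 = insert y (I.1.erase x₂)) :
    J₁ = J₂ := by
  obtain rfl : x₁ = x₂ := by
    by_contra hne
    exact J₁.2.2 x₂ (by simp [h₁, Ne.symm hne, hx₂]) y (by simp [h₁]) hadj
  exact Subtype.ext (h₁.trans h₂.symm)

theorem exists_far_of_slides_same_token (hk : 2 ≤ k)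
    {I J₁ J₂ : {I : Finset W // TSVert G k I}} {x y₁ y₂ : W}
    (hx : x ∈ I.1) (hy₁ : y₁ ∉ I.1) (hy₂ : y₂ ∉ I.1) (hne : y₁ ≠ y₂)
    (h₁ : J₁.1 = insert y₁ (I.1.erase x)) (h₂ : J₂.1 = insert y₂ (I.1.erase x))
    (hnadj : ¬ (TS G k).Adj J₁ J₂) :
    ∃ T, ∀ J, (I = J ∨ (TS G k).Adj I J) → ¬ (J = T ∨ (TS G k).Adj J T) := by
  obtain ⟨w, hw⟩ : (I.1.erase x).Nonempty := by
    rw [← Finset.card_pos, Finset.card_erase_of_mem hx, I.2.1]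
    omega
  have hwx : w ≠ x := Finset.ne_of_mem_erase hw
  have hwI : w ∈ I.1 := Finset.mem_of_mem_erase hw
  have hy₂J₁ : y₂ ∉ J₁.1 := by simp [h₁, Ne.symm hne, hy₂]
  have hy₁J₂ : y₁ ∉ J₂.1 := by simp [h₂, hne, hy₁]
  have hy₁₂ : ¬ G.Adj y₁ y₂ := fun h =>
    hnadj <| adj_of_slide (by simp [h₁]) hy₂J₁ h <| by
      rw [h₂, h₁, Finset.erase_insert (by simp [hy₁])]
  -- `T` performs both slides at once and gives up a third token `w`.
  have hT : TSVert G k (insert y₂ (J₁.1.erase w)) := by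
    refine J₁.2.insert_erase (by simp [h₁, hwx, hwI]) hy₂J₁ ?_
    intro z hz
    rcases Finset.mem_insert.mp (h₁ ▸ Finset.mem_of_mem_erase hz) with rfl | hz'
    · exact fun h => hy₁₂ h.symm
    · exact J₂.2.2 y₂ (by simp [h₂]) z (by simp [h₂, hz'])
  refine ⟨⟨_, hT⟩, ?_⟩
  have hy₁T : y₁ ∈ insert y₂ (J₁.1.erase w) := by
    simp [h₁, show y₁ ≠ w from fun h => hy₁ (h ▸ hwI)]
  have hy₂T : y₂ ∈ insert y₂ (J₁.1.erase w) := Finset.mem_insert_self _ _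
  have hwT : w ∉ insert y₂ (J₁.1.erase w) := by
    simp [show w ≠ y₂ from fun h => hy₂ (h ▸ hwI)]
  -- Among `I` and its neighbours only `J₁` and `J₂` contain `y₁` or `y₂`, and `T` could
  -- only be reached from `J₁` by sliding `w` to `y₂`, which both lie in the independent set
  -- `J₂` (symmetrically for `J₂`).
  rintro J (rfl | hJ)
  · exact not_eq_or_adj_of_mem_sdiff hne (by simp [hy₁T, hy₁]) (by simp [hy₂T, hy₂])
  obtain ⟨x₃, y₃, hx₃, -, hxy₃, h₃⟩ := exists_slide_of_adj hJ
  by_cases e₁ : y₃ = y₁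
  · subst e₁
    obtain rfl := eq_of_slide_target hx₃ hxy₃ h₁ h₃
    rintro (h | h)
    · exact hy₂J₁ (h ▸ hy₂T)
    · exact J₂.2.2 w (by simp [h₂, hwx, hwI]) y₂ (by simp [h₂])
        (adj_of_adj_of_mem_sdiff h (Finset.mem_sdiff.mpr ⟨by simp [h₁, hwx, hwI], hwT⟩)
          (by simp [hy₂T, hy₂J₁]))
  by_cases e₂ : y₃ = y₂
  · subst e₂
    obtain rfl := eq_of_slide_target hx₃ hxy₃ h₂ h₃
    rintro (h | h)
    · exact hy₁J₂ (h ▸ hy₁T)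
    · exact J₁.2.2 w (by simp [h₁, hwx, hwI]) y₁ (by simp [h₁])
        (adj_of_adj_of_mem_sdiff h (Finset.mem_sdiff.mpr ⟨by simp [h₂, hwx, hwI], hwT⟩)
          (by simp [hy₁T, hy₁J₂]))
  exact not_eq_or_adj_of_mem_sdiff hne (by simp [hy₁T, h₃, Ne.symm e₁, hy₁])
    (by simp [hy₂T, h₃, Ne.symm e₂, hy₂])

end

theorem card_le_of_forall_dist_le_two (hk : 2 ≤ k) {ι : Type*} [Fintype ι]
    (I : {I : Finset W // TSVert G k I}) (N : ι → {I : Finset W // TSVert G k I})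
    (hN : Function.Injective N) (hadj : ∀ i, (TS G k).Adj I (N i))
    (hind : ∀ i j, ¬ (TS G k).Adj (N i) (N j))
    (hdist : ∀ T, ∃ J, (I = J ∨ (TS G k).Adj I J) ∧ (J = T ∨ (TS G k).Adj J T)) :
    Fintype.card ι ≤ k := by
  classical
  choose x y hx hy hxy hslide using fun i => exists_slide_of_adj (hadj i)
  have hinj : Function.Injective x := by
    intro i j hij
    by_contra hne
    have hyij : y i ≠ y j := fun h =>
      hne (hN (eq_of_slide_target (hx j) (h ▸ hxy j) (hslide i) (h ▸ hslide j)))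
    obtain ⟨T, hT⟩ := exists_far_of_slides_same_token hk (hx i) (hy i) (hy j) hyij
      (hslide i) (hij ▸ hslide j) (hind i j)
    obtain ⟨J, hIJ, hJT⟩ := hdist T
    exact hT J hIJ hJT
  have := Finset.card_le_card_of_injOn (s := Finset.univ) (t := I.1) x (fun i _ => hx i)
    hinj.injOn
  rwa [Finset.card_univ, I.2.1] at this

end TS

theorem succ_le_of_TS_iso_D {W : Type*} {G : SimpleGraph W} {k r s : ℕ} (hk : 2 ≤ k)
    (f : TS G k ≃g D r 2 s) : s + 1 ≤ k := by
  classical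
  let c : Fin r ⊕ Fin 2 ⊕ Fin s := .inr (.inl 1)
  let nbr : Option (Fin s) → Fin r ⊕ Fin 2 ⊕ Fin s :=
    fun o => o.elim (.inr (.inl 0)) (.inr ∘ .inr)
  have hnbr : Function.Injective nbr := by rintro (_ | j) (_ | j') <;> simp [nbr]
  have hdist : ∀ z, ∃ z', (c = z' ∨ (D r 2 s).Adj c z') ∧
      (z' = z ∨ (D r 2 s).Adj z' z) := by
    rintro (i | t | j)
    · exact ⟨.inr (.inl 0), by simp [c, D]⟩
    · exact ⟨.inr (.inl t), by fin_cases t <;> simp [c, D]⟩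
    · exact ⟨.inr (.inr j), by simp [c, D]⟩
  simpa using TS.card_le_of_forall_dist_le_two hk (f.symm c) (f.symm ∘ nbr)
    (f.symm.injective.comp hnbr)
    (fun o => f.symm.map_adj_iff.mpr (by rcases o with _ | j <;> simp [c, nbr, D]))
    (fun o o' => f.symm.map_adj_iff.not.mpr <| by
      rcases o with _ | j <;> rcases o' with _ | j' <;> simp [nbr, D])
    fun T => by
      obtain ⟨z', h₁, h₂⟩ := hdist (f T)
      rw [← f.symm_apply_apply T]
      exact ⟨f.symm z', h₁.imp (congrArg f.symm) f.symm.map_adj_iff.mpr,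
        h₂.imp (congrArg f.symm) f.symm.map_adj_iff.mpr⟩

inductive GadgetVertex (r s m : ℕ) : Type
  | pole (t : Fin 2)
  | idle (j : Fin m)
  | leafL (i : Fin r)
  | leafR (i : Fin s)
  deriving DecidableEq

namespace GadgetVertex

variable {r s m : ℕ}

-- The slots cut the gadget into `m + 1` cliques, so an independent set meets each at most once.
def slot : GadgetVertex r s m → ℕ
  | pole _ => m
  | idle j => j
  | leafL i => i
  | leafR i => i

def Rel : GadgetVertex r s m → GadgetVertex r s m → Prop
  | pole _, pole _ => True
  | pole t, leafL _ => t = 1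
  | pole t, leafR _ => t = 0
  | idle j, leafL i => (j : ℕ) = i
  | idle j, leafR i => (j : ℕ) = i
  | leafL _, leafL _ | leafL _, leafR _ | leafR _, leafR _ => True
  | _, _ => False

end GadgetVertex

open GadgetVertex

def gadget (r s m : ℕ) : SimpleGraph (GadgetVertex r s m) := fromRel GadgetVertex.Rel

section Gadget

variable {r s m : ℕ}

theorem gadget_adj_of_slot_eq (hr : r ≤ m) (hs : s ≤ m) {x y : GadgetVertex r s m}
    (hne : x ≠ y) (h : x.slot = y.slot) : (gadget r s m).Adj x y := by
  cases x <;> cases y <;> simp_all [gadget, slot, GadgetVertex.Rel, Fin.val_inj] <;> omega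

variable (r s m) in
def idles : Finset (GadgetVertex r s m) := Finset.univ.image idle

theorem mem_idles {x : GadgetVertex r s m} : x ∈ idles r s m ↔ ∃ j, x = idle j := by
  simp [idles, eq_comm]

@[simp]
theorem idle_mem_idles (j : Fin m) : idle j ∈ idles r s m := mem_idles.mpr ⟨j, rfl⟩

theorem card_idles : (idles r s m).card = m := by
  rw [idles, Finset.card_image_of_injective _ fun _ _ => idle.inj, Finset.card_univ,
    Fintype.card_fin]

theorem exists_pole_mem (hr : r ≤ m) (hs : s ≤ m) {I : Finset (GadgetVertex r s m)}
    (hI : TSVert (gadget r s m) (m + 1) I) :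
    ∃ t, pole t ∈ I := by
  by_contra! h
  have hslot : Set.MapsTo slot (I : Set (GadgetVertex r s m)) (Finset.range m : Set ℕ) := by
    rintro (t | j | i | i) hx
    · exact absurd hx (h t)
    all_goals simp only [slot, Finset.coe_range, Set.mem_Iio]; omega
  have := Finset.card_le_card_of_injOn slot hslot fun x hx y hy hxy => by
    by_contra hne
    exact hI.2 x hx y hy (gadget_adj_of_slot_eq hr hs hne hxy)
  rw [hI.1, Finset.card_range] at this
  omega

variable (hr : r ≤ m) (hs : s ≤ m)

def gadgetSet : Fin r ⊕ Fin 2 ⊕ Fin s → Finset (GadgetVertex r s m)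
  | .inr (.inl t) => insert (pole t) (idles r s m)
  | .inl i => insert (leafL i) ((insert (pole 0) (idles r s m)).erase (idle (i.castLE hr)))
  | .inr (.inr i) => insert (leafR i) ((insert (pole 1) (idles r s m)).erase (idle (i.castLE hs)))

theorem tsVert_insert_pole_idles (t : Fin 2) :
    TSVert (gadget r s m) (m + 1) (insert (pole t) (idles r s m)) := by
  refine ⟨by rw [Finset.card_insert_of_notMem (by simp [mem_idles]), card_idles], ?_⟩
  simp [mem_idles, gadget, GadgetVertex.Rel]

theorem tsVert_gadgetSet (z : Fin r ⊕ Fin 2 ⊕ Fin s) :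
    TSVert (gadget r s m) (m + 1) (gadgetSet hr hs z) := by
  rcases z with i | t | i
  · refine (tsVert_insert_pole_idles 0).insert_erase (by simp [mem_idles])
      (by simp [mem_idles]) ?_
    simp only [Finset.mem_erase, Finset.mem_insert, mem_idles]
    rintro _ ⟨hne, rfl | ⟨j, rfl⟩⟩ <;> simp_all [gadget, GadgetVertex.Rel, Fin.ext_iff]
  · exact tsVert_insert_pole_idles t
  · refine (tsVert_insert_pole_idles 1).insert_erase (by simp [mem_idles])
      (by simp [mem_idles]) ?_
    simp only [Finset.mem_erase, Finset.mem_insert, mem_idles]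
    rintro _ ⟨hne, rfl | ⟨j, rfl⟩⟩ <;> simp_all [gadget, GadgetVertex.Rel, Fin.ext_iff]

def toTS (z : Fin r ⊕ Fin 2 ⊕ Fin s) : {I // TSVert (gadget r s m) (m + 1) I} :=
  ⟨gadgetSet hr hs z, tsVert_gadgetSet hr hs z⟩

theorem toTS_adj_of_adj {z z' : Fin r ⊕ Fin 2 ⊕ Fin s} (h : (D r 2 s).Adj z z') :
    (TS (gadget r s m) (m + 1)).Adj (toTS hr hs z) (toTS hr hs z') := by
  have h01 : (TS (gadget r s m) (m + 1)).Adj (toTS hr hs (.inr (.inl 0)))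
      (toTS hr hs (.inr (.inl 1))) :=
    TS.adj_of_slide (x := pole 0) (y := pole 1) (by simp [toTS, gadgetSet])
      (by simp [toTS, gadgetSet, mem_idles]) (by simp [gadget, GadgetVertex.Rel])
      (by simp only [toTS, gadgetSet]; rw [Finset.erase_insert (by simp [mem_idles])])
  have hL : ∀ i, (TS (gadget r s m) (m + 1)).Adj (toTS hr hs (.inr (.inl 0)))
      (toTS hr hs (.inl i)) :=
    fun i => TS.adj_of_slide (x := idle (i.castLE hr)) (y := leafL i)
      (by simp [toTS, gadgetSet, mem_idles]) (by simp [toTS, gadgetSet, mem_idles])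
      (by simp [gadget, GadgetVertex.Rel]) rfl
  have hR : ∀ i, (TS (gadget r s m) (m + 1)).Adj (toTS hr hs (.inr (.inl 1)))
      (toTS hr hs (.inr (.inr i))) :=
    fun i => TS.adj_of_slide (x := idle (i.castLE hs)) (y := leafR i)
      (by simp [toTS, gadgetSet, mem_idles]) (by simp [toTS, gadgetSet, mem_idles])
      (by simp [gadget, GadgetVertex.Rel]) rfl
  rcases z with i | t | i <;> rcases z' with i' | t' | i' <;> try fin_cases t
  all_goals try fin_cases t'
  all_goals simp [D] at h
  all_goals first
    | exact h01 | exact h01.symm | exact hL _ | exact (hL _).symm | exact hR _ | exact (hR _).symm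

theorem toTS_separated {z z' : Fin r ⊕ Fin 2 ⊕ Fin s} (hne : z ≠ z')
    (h : ¬ (D r 2 s).Adj z z') :
    ¬ (toTS hr hs z = toTS hr hs z' ∨
      (TS (gadget r s m) (m + 1)).Adj (toTS hr hs z) (toTS hr hs z')) := by
  rcases z with i | t | i <;> rcases z' with i' | t' | i' <;> try fin_cases t
  all_goals try fin_cases t'
  all_goals simp [D] at h hne
  · refine TS.not_eq_or_adj_of_mem_sdiff (a := leafL i') (b := idle (i.castLE hr)) ?_ ?_ ?_ <;>
      simp_all [toTS, gadgetSet, mem_idles, eq_comm]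
  · refine TS.not_eq_or_adj_of_mem_sdiff (a := pole 1) (b := idle (i.castLE hr)) ?_ ?_ ?_ <;>
      simp_all [toTS, gadgetSet, mem_idles, eq_comm]
  · refine TS.not_eq_or_adj_of_mem_sdiff (a := leafR i') (b := pole 1) ?_ ?_ ?_ <;>
      simp_all [toTS, gadgetSet, mem_idles, eq_comm]
  · refine TS.not_eq_or_adj_of_mem_sdiff (a := leafL i') (b := pole 0) ?_ ?_ ?_ <;>
      simp_all [toTS, gadgetSet, mem_idles, eq_comm]
  · refine TS.not_eq_or_adj_of_mem_sdiff (a := leafR i') (b := pole 1) ?_ ?_ ?_ <;>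
      simp_all [toTS, gadgetSet, mem_idles, eq_comm]
  · refine TS.not_eq_or_adj_of_mem_sdiff (a := leafL i') (b := pole 0) ?_ ?_ ?_ <;>
      simp_all [toTS, gadgetSet, mem_idles, eq_comm]
  · refine TS.not_eq_or_adj_of_mem_sdiff (a := pole 0) (b := idle (i.castLE hs)) ?_ ?_ ?_ <;>
      simp_all [toTS, gadgetSet, mem_idles, eq_comm]
  · refine TS.not_eq_or_adj_of_mem_sdiff (a := leafR i') (b := idle (i.castLE hs)) ?_ ?_ ?_ <;>
      simp_all [toTS, gadgetSet, mem_idles, eq_comm]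

theorem exists_toTS_eq (I : {I // TSVert (gadget r s m) (m + 1) I}) : ∃ z, toTS hr hs z = I := by
  obtain ⟨I, hI⟩ := I
  suffices ∃ z, I ⊆ gadgetSet hr hs z by
    obtain ⟨z, hz⟩ := this
    refine ⟨z, Subtype.ext (Finset.eq_of_subset_of_card_le hz ?_).symm⟩
    rw [(tsVert_gadgetSet hr hs z).1, hI.1]
  obtain ⟨t, ht⟩ := exists_pole_mem hr hs hI
  fin_cases t
  · by_cases hL : ∃ i, leafL i ∈ I
    · obtain ⟨i, hi⟩ := hL
      refine ⟨.inl i, fun w hw => ?_⟩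
      have h₁ := hI.2 w hw _ ht
      have h₂ := hI.2 w hw _ hi
      cases w <;> simp_all [gadget, GadgetVertex.Rel, gadgetSet, mem_idles]
      exact fun h => h₂ (congrArg Fin.val h)
    · refine ⟨.inr (.inl 0), fun w hw => ?_⟩
      have h₁ := hI.2 w hw _ ht
      cases w <;> simp_all [gadget, GadgetVertex.Rel, gadgetSet, mem_idles]
  · by_cases hR : ∃ i, leafR i ∈ I
    · obtain ⟨i, hi⟩ := hR
      refine ⟨.inr (.inr i), fun w hw => ?_⟩
      have h₁ := hI.2 w hw _ ht
      have h₂ := hI.2 w hw _ hi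
      cases w <;> simp_all [gadget, GadgetVertex.Rel, gadgetSet, mem_idles]
      exact fun h => h₂ (congrArg Fin.val h)
    · refine ⟨.inr (.inl 1), fun w hw => ?_⟩
      have h₁ := hI.2 w hw _ ht
      cases w <;> simp_all [gadget, GadgetVertex.Rel, gadgetSet, mem_idles]

end Gadget

theorem nonempty_TS_gadget_iso {r s m : ℕ} (hr : r ≤ m) (hs : s ≤ m) :
    Nonempty (TS (gadget r s m) (m + 1) ≃g D r 2 s) := by
  have hinj : Function.Injective (toTS hr hs) := fun z z' h => by
    by_contra hne
    by_cases hadj : (D r 2 s).Adj z z'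
    · exact (TS _ _).ne_of_adj (toTS_adj_of_adj hr hs hadj) h
    · exact toTS_separated hr hs hne hadj (Or.inl h)
  let e := Equiv.ofBijective _ ⟨hinj, exists_toTS_eq hr hs⟩
  refine ⟨(RelIso.mk e fun {z z'} => ⟨fun h => ?_, toTS_adj_of_adj hr hs⟩).symm⟩
  by_contra hadj
  exact toTS_separated hr hs (fun hzz => (TS _ _).ne_of_adj h (congrArg _ hzz)) hadj (Or.inr h)

theorem stmt18_general (r s k : ℕ) (hrs : r ≤ s) (hk : 2 ≤ k) :
    (∃ (W : Type) (G : SimpleGraph W), Nonempty (TS G k ≃g D r 2 s)) ↔ s ≤ k - 1 := by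
  constructor
  · rintro ⟨W, G, ⟨f⟩⟩
    have := succ_le_of_TS_iso_D hk f
    omega
  · intro hsk
    obtain ⟨m, rfl⟩ : ∃ m, k = m + 1 := ⟨k - 1, by omega⟩
    exact ⟨_, gadget r s m, nonempty_TS_gadget_iso (by omega) (by omega)⟩

theorem stmt18 (r s k : ℕ) (hr : 1 ≤ r) (hrs : r ≤ s) (hk : 2 ≤ k) :
    (∃ (W : Type) (G : SimpleGraph W), Nonempty (TS G k ≃g D r 2 s)) ↔ s ≤ k - 1 :=
  stmt18_general r s k hrs hk
end
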